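/- arXiv:2507.03151 — 4 statements merged into one kernel-verified Lean document; each statement's English description precedes it below -/
import Mathlib

section
/- For every positive integer n, there exists a decision tree over query set [n]×[n] (edge queries, where the answer to query (i,j) on hidden matrix M is M(i,j)) of depth at most n(n-1)/2 that computes the identity function on the class M_n of n×n permutation matrices, i.e., on every input matrix from M_n the tree outputs that matrix. -/
open scoped Classical

/-- A decision tree over query set `Q` with outputs in `R`: either a leaf labeled by an
element of `R`, or an internal node labeled by a query `q : Q` with two child subtrees
(one for answer `0` = `false`, one for answer `1` = `true`). -/
inductive DTree (Q R : Type) : Type where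
  | leaf : R → DTree Q R
  | node : Q → DTree Q R → DTree Q R → DTree Q R

namespace DTree

/-- Evaluation of a decision tree on an answer function `x : Q → Bool`. -/
def eval {Q R : Type} : DTree Q R → (Q → Bool) → R
  | .leaf r, _ => r
  | .node q t0 t1, x => if x q then eval t1 x else eval t0 x

/-- The depth of a decision tree: the length of its longest root-to-leaf path. -/
def depth {Q R : Type} : DTree Q R → ℕ
  | .leaf _ => 0
  | .node _ t0 t1 => 1 + max (depth t0) (depth t1)

/-- `T` computes `f` on the domain `D` of answer functions if it outputs `f x` on
every `x ∈ D`. -/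
def Computes {Q R : Type} (T : DTree Q R) (D : Set (Q → Bool)) (f : (Q → Bool) → R) : Prop :=
  ∀ x ∈ D, T.eval x = f x

end DTree

/-- A randomized decision tree: a finitely supported probability distribution over
decision trees. -/
structure RandDTree (Q R : Type) where
  support : Finset (DTree Q R)
  prob : DTree Q R → ℝ
  nonneg : ∀ t, 0 ≤ prob t
  total : ∑ t ∈ support, prob t = 1
  zero_off : ∀ t, t ∉ support → prob t = 0

namespace RandDTree

/-- The cost of a randomized decision tree: the maximum depth of a tree in its support. -/
def cost {Q R : Type} (μ : RandDTree Q R) : ℕ := μ.support.sup DTree.depth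

/-- `μ` computes `f` on domain `D` with error `1/3` if for every `x ∈ D` the probability
that a tree drawn from `μ` outputs `f x` on `x` is at least `2/3`. -/
def Computes {Q R : Type} (μ : RandDTree Q R) (D : Set (Q → Bool)) (f : (Q → Bool) → R) :
    Prop :=
  ∀ x ∈ D, (2 : ℝ) / 3 ≤ ∑ t ∈ μ.support, (if t.eval x = f x then μ.prob t else 0)

end RandDTree

/-- The class `M_n` of `n × n` permutation matrices (bipartite adjacency matrices of
matchings), viewed as Boolean functions on `Fin n × Fin n`: exactly one `1` in each row
and each column, i.e. `M (i, j) = 1` iff `j = σ i` for a permutation `σ`. -/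
def PermMatrices (n : ℕ) : Set (Fin n × Fin n → Bool) :=
  {M | ∃ σ : Equiv.Perm (Fin n), ∀ p : Fin n × Fin n, M p = decide (σ p.1 = p.2)}

/-- The `n × n` lower triangular matrix `L_n`: `L_n (i, j) = 1` iff `i ≥ j`. -/
def Ln (n : ℕ) : Fin n × Fin n → Bool := fun p => decide (p.2 ≤ p.1)

/-- The class `C_n` of column permutations of `L_n`: matrices `M` with
`M (i, j) = L_n (i, τ j)` for some permutation `τ`. -/
def Cn (n : ℕ) : Set (Fin n × Fin n → Bool) :=
  {M | ∃ τ : Equiv.Perm (Fin n), ∀ p : Fin n × Fin n, M p = decide (τ p.2 ≤ p.1)}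

/-- The class `H_n` of matrices obtained from `L_n` by a row permutation and a column
permutation: `M (i, j) = L_n (σ i, τ j)`. -/
def Hn (n : ℕ) : Set (Fin n × Fin n → Bool) :=
  {M | ∃ σ τ : Equiv.Perm (Fin n), ∀ p : Fin n × Fin n, M p = decide (τ p.2 ≤ σ p.1)}

/-- The matrix obtained from `M` by interchanging columns `k` and `l`. -/
def colSwap {n : ℕ} (M : Fin n × Fin n → Bool) (k l : Fin n) : Fin n × Fin n → Bool :=
  fun p => M (p.1, Equiv.swap k l p.2)

/-- The Hamming weight of the `j`-th column of `M`: the number of its entries equal to `1`. -/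
def colWeight {n : ℕ} (M : Fin n × Fin n → Bool) (j : Fin n) : ℕ :=
  (Finset.univ.filter (fun i : Fin n => M (i, j) = true)).card

namespace MatchingUB

open DTree

variable {n : ℕ}

abbrev Tr (n : ℕ) := DTree (Fin n × Fin n) (Fin n × Fin n → Bool)

/-- Matrix of a function `acc : Fin n → Fin n`. -/
def mat (acc : Fin n → Fin n) : Fin n × Fin n → Bool := fun p => decide (acc p.1 = p.2)

/-- Scan candidate columns for row `i`; `k` is the continuation handling remaining rows. -/
def scanT (i : Fin n) (k : (Fin n → Fin n) → List (Fin n) → Tr n)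
    (acc : Fin n → Fin n) : List (Fin n) → List (Fin n) → Tr n
  | _, [] => .leaf (mat acc)
  | tried, [c] => k (Function.update acc i c) tried
  | tried, c :: c' :: cs =>
      .node (i, c) (scanT i k acc (tried ++ [c]) (c' :: cs))
        (k (Function.update acc i c) (tried ++ c' :: cs))

def buildT : List (Fin n) → (Fin n → Fin n) → List (Fin n) → Tr n
  | [], acc, _ => .leaf (mat acc)
  | i :: rest, acc, cols => scanT i (buildT rest) acc [] cols

lemma scan_depth (i : Fin n) (k : (Fin n → Fin n) → List (Fin n) → Tr n) (B L : ℕ)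
    (hk : ∀ acc' tr', tr'.length ≤ L → (k acc' tr').depth ≤ B) :
    ∀ (cands tried : List (Fin n)) (acc : Fin n → Fin n),
      tried.length + cands.length ≤ L + 1 →
      (scanT i k acc tried cands).depth ≤ (cands.length - 1) + B := by
  intro cands
  induction cands with
  | nil => intro tried acc h; simp [scanT, depth]
  | cons c cs ih =>
    intro tried acc h
    cases cs with
    | nil =>
      simp only [scanT]
      have := hk (Function.update acc i c) tried (by simp at h; omega)
      simpa using this.trans (by omega)
    | cons c' cs' =>
      simp only [scanT, depth]
      have h1 := ih (tried ++ [c]) acc (by simp at h ⊢; omega)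
      have h2 := hk (Function.update acc i c) (tried ++ c' :: cs')
        (by simp at h ⊢; omega)
      simp only [List.length_cons] at h1 ⊢
      omega

lemma gauss (r : ℕ) : r + r * (r - 1) / 2 ≤ (r + 1) * ((r + 1) - 1) / 2 := by
  rcases r with _ | s
  · simp
  · obtain ⟨k, hk⟩ := Nat.even_mul_succ_self s
    simp only [Nat.add_sub_cancel]
    have h1 : (s + 1) * s = s * (s + 1) := Nat.mul_comm _ _
    have h2 : (s + 1 + 1) * (s + 1) = s * (s + 1) + 2 * (s + 1) := by ring
    omega

lemma build_depth : ∀ (rows : List (Fin n)) (acc : Fin n → Fin n) (cols : List (Fin n)),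
    cols.length ≤ rows.length →
    (buildT rows acc cols).depth ≤ rows.length * (rows.length - 1) / 2 := by
  intro rows
  induction rows with
  | nil => intro acc cols h; simp [buildT, depth]
  | cons i rest ih =>
    intro acc cols h
    have hscan := scan_depth i (buildT rest) (rest.length * (rest.length - 1) / 2)
      rest.length (fun acc' tr' htr => ih acc' tr' htr) cols [] acc
      (by simp at h ⊢; omega)
    refine le_trans hscan ?_
    simp only [List.length_cons] at h ⊢
    have hg := gauss rest.length
    omega

variable (σ : Equiv.Perm (Fin n)) (x : Fin n × Fin n → Bool)

lemma scan_eval (hx : ∀ p, x p = decide (σ p.1 = p.2)) (i : Fin n) (rest : List (Fin n))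
    (hi : i ∉ rest) (k : (Fin n → Fin n) → List (Fin n) → Tr n)
    (hk : ∀ acc' cols', (∀ j ∈ rest, σ j ∈ cols') → (∀ j, j ∉ rest → acc' j = σ j) →
      (k acc' cols').eval x = mat σ) :
    ∀ (cands tried : List (Fin n)) (acc : Fin n → Fin n),
      σ i ∈ cands → (∀ j ∈ rest, σ j ∈ tried ++ cands) →
      (∀ j, j ∉ i :: rest → acc j = σ j) →
      (scanT i k acc tried cands).eval x = mat σ := by
  intro cands
  induction cands with
  | nil => intro tried acc hmem; simp at hmem
  | cons c cs ih =>
    intro tried acc hmem hrest hacc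
    have hne : ∀ j ∈ rest, σ j ≠ c → σ j ∈ tried ++ cs := by
      intro j hj hne
      have := hrest j hj
      simp only [List.mem_append, List.mem_cons] at this ⊢
      tauto
    cases cs with
    | nil =>
      have hic : σ i = c := by simpa using hmem
      simp only [scanT]
      apply hk
      · intro j hj
        have hne2 : σ j ≠ c := by
          intro hc
          have hji : j = i := σ.injective (by rw [hc, hic])
          exact hi (hji ▸ hj)
        simpa using hne j hj hne2
      · intro j hj
        by_cases hji : j = i
        · subst hji; simp [Function.update, hic]
        · rw [Function.update_of_ne hji]
          exact hacc j (by simp [hji, hj])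
    | cons c' cs' =>
      simp only [scanT, eval, hx (i, c)]
      by_cases hic : σ i = c
      · have hd : decide (σ i = c) = true := by simp [hic]
        simp only [hd, if_true]
        apply hk
        · intro j hj
          refine hne j hj ?_
          intro hc
          have hji : j = i := σ.injective (by rw [hc, hic])
          exact hi (hji ▸ hj)
        · intro j hj
          by_cases hji : j = i
          · subst hji; simp [Function.update, hic]
          · rw [Function.update_of_ne hji]
            exact hacc j (by simp [hji, hj])
      · have hd : decide (σ i = c) = false := by simp [hic]
        simp only [hd, if_false]
        apply ih (tried ++ [c]) acc
        · simp only [List.mem_cons] at hmem ⊢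
          tauto
        · intro j hj
          have := hrest j hj
          simp only [List.mem_append, List.mem_cons] at this ⊢
          tauto
        · exact hacc

lemma build_eval (hx : ∀ p, x p = decide (σ p.1 = p.2)) :
    ∀ (rows : List (Fin n)) (acc : Fin n → Fin n) (cols : List (Fin n)),
      rows.Nodup → (∀ j ∈ rows, σ j ∈ cols) → (∀ j, j ∉ rows → acc j = σ j) →
      (buildT rows acc cols).eval x = mat σ := by
  intro rows
  induction rows with
  | nil =>
    intro acc cols _ _ hacc
    simp only [buildT, eval]
    funext p
    simp only [mat]
    rw [hacc p.1 (by simp)]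
  | cons i rest ih =>
    intro acc cols hnd hmem hacc
    simp only [List.nodup_cons] at hnd
    exact scan_eval σ x hx i rest hnd.1 (buildT rest)
      (fun acc' cols' h1 h2 => ih acc' cols' hnd.2 h1 h2) cols [] acc
      (hmem i (by simp)) (fun j hj => by simpa using hmem j (by simp [hj]))
      hacc

end MatchingUB

/-- For every positive integer `n`, there is a decision tree over query set `[n] × [n]`
(edge queries) of depth at most `n (n - 1) / 2` that computes the identity function on
the class `M_n` of `n × n` permutation matrices. -/
theorem matching_deterministic_upper_bound (n : ℕ) (hn : 0 < n) :
    ∃ T : DTree (Fin n × Fin n) (Fin n × Fin n → Bool),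
      T.depth ≤ n * (n - 1) / 2 ∧ T.Computes (PermMatrices n) id := by
  refine ⟨MatchingUB.buildT (List.finRange n) (fun _ => ⟨0, hn⟩) (List.finRange n), ?_, ?_⟩
  · have := MatchingUB.build_depth (List.finRange n) (fun _ => ⟨0, hn⟩) (List.finRange n)
      (by simp)
    simpa using this
  · intro x hx
    obtain ⟨σ, hσ⟩ := hx
    have := MatchingUB.build_eval σ x hσ (List.finRange n) (fun _ => ⟨0, hn⟩)
      (List.finRange n) (List.nodup_finRange n) (fun j _ => List.mem_finRange _)
      (fun j hj => absurd (List.mem_finRange j) hj)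
    rw [this]
    funext p
    simp [MatchingUB.mat, hσ p]
end

section
/- Let n be a positive integer and let σ, τ be permutations of [n]. If L_n(σ(i), τ(j)) = 0 for every pair (i,j) ∈ [n]×[n] with j ∈ {i+1, i+2}, then L_n(σ(i), τ(j)) = L_n(i,j) for all i, j ∈ [n]; that is, L_n is the unique matrix obtained from L_n by a row permutation and a column permutation that has zeros at all positions (i,j) with j ∈ {i+1, i+2}. -/
open scoped Classical

/-- If a row-and-column permutation of `L_n` has zeros at all positions `(i, j)` with
`j ∈ {i + 1, i + 2}`, then it equals `L_n`: `L_n (σ i, τ j) = L_n (i, j)` for all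
`i, j`. (`L_n (i, j) = 1` iff `i ≥ j`, i.e. iff `τ j ≤ σ i` after permuting.) -/
theorem zero_certificate_unique (n : ℕ) (hn : 0 < n) (σ τ : Equiv.Perm (Fin n))
    (h : ∀ i j : Fin n, ((j : ℕ) = (i : ℕ) + 1 ∨ (j : ℕ) = (i : ℕ) + 2) → ¬ τ j ≤ σ i) :
    ∀ i j : Fin n, (τ j ≤ σ i ↔ j ≤ i) := by
  have step : ∀ m : Fin n, (∀ k : Fin n, (m : ℕ) < (k : ℕ) → σ k = k ∧ τ k = k) →
      σ m = m ∧ τ m = m := by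
    intro m IH
    have hτle : ∀ j : Fin n, (j : ℕ) ≤ (m : ℕ) ↔ (τ j : ℕ) ≤ (m : ℕ) := by
      intro j
      constructor
      · intro hj
        by_contra hc
        push_neg at hc
        have hfix := (IH (τ j) hc).2
        have : τ j = j := τ.injective hfix
        omega
      · intro hj
        by_contra hc
        push_neg at hc
        have hfix := (IH j hc).2
        rw [hfix] at hj
        omega
    have hσle : ∀ i : Fin n, (i : ℕ) ≤ (m : ℕ) ↔ (σ i : ℕ) ≤ (m : ℕ) := by
      intro i
      constructor
      · intro hi
        by_contra hc
        push_neg at hc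
        have hfix := (IH (σ i) hc).1
        have : σ i = i := σ.injective hfix
        omega
      · intro hi
        by_contra hc
        push_neg at hc
        have hfix := (IH i hc).1
        rw [hfix] at hi
        omega
    have hσm : σ m = m := by
      set i := σ.symm m with hidef
      have hσi : σ i = m := σ.apply_symm_apply m
      have him : (i : ℕ) ≤ (m : ℕ) := (hσle i).mpr (by rw [hσi])
      by_cases hie : (i : ℕ) = (m : ℕ)
      · have : i = m := Fin.ext hie
        rw [← this, hσi, this]
      · exfalso
        have hi1 : (i : ℕ) + 1 < n := by omega
        have h1 := h i ⟨(i : ℕ) + 1, hi1⟩ (Or.inl rfl)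
        apply h1
        rw [Fin.le_def, hσi]
        have : (τ ⟨(i : ℕ) + 1, hi1⟩ : ℕ) ≤ (m : ℕ) := (hτle _).mp (by simp; omega)
        exact this
    have hτm : τ m = m := by
      by_cases hc : τ m = m
      · exact hc
      exfalso
      set j := τ.symm m with hjdef
      have hτj : τ j = m := τ.apply_symm_apply m
      have hjm : (j : ℕ) ≤ (m : ℕ) := (hτle j).mpr (by rw [hτj])
      have hjne : (j : ℕ) ≠ (m : ℕ) := by
        intro he
        exact hc (by rw [← Fin.ext he, hτj, Fin.ext he])
      have hjlt : (j : ℕ) < (m : ℕ) := by omega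
      have hm1 : (m : ℕ) - 1 < n := by omega
      set v : Fin n := ⟨(m : ℕ) - 1, hm1⟩ with hvdef
      set i := σ.symm v with hidef
      have hσi : σ i = v := σ.apply_symm_apply v
      have him : (i : ℕ) ≤ (m : ℕ) := (hσle i).mpr (by rw [hσi]; show (m : ℕ) - 1 ≤ (m : ℕ); omega)
      have hine : (i : ℕ) ≠ (m : ℕ) := by
        intro he
        have : i = m := Fin.ext he
        rw [this, hσm] at hσi
        have : (m : ℕ) = (m : ℕ) - 1 := by
          have := congrArg (Fin.val) hσi
          simpa using this
        omega
      have hi1 : (i : ℕ) + 1 < n := by omega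
      set j1 : Fin n := ⟨(i : ℕ) + 1, hi1⟩ with hj1def
      have h1 := h i j1 (Or.inl rfl)
      have hj1m : (τ j1 : ℕ) ≤ (m : ℕ) := (hτle j1).mp (by simp [hj1def]; omega)
      have hj1gt : ¬ (τ j1 : ℕ) ≤ (m : ℕ) - 1 := by
        intro hle
        exact h1 (by rw [Fin.le_def, hσi]; exact hle)
      have hτj1 : (τ j1 : ℕ) = (m : ℕ) := by omega
      have hj1j : j1 = j := by
        apply τ.injective
        apply Fin.ext
        rw [hτj1, hτj]
      have hji : (j : ℕ) = (i : ℕ) + 1 := by rw [← hj1j]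
      have hi2 : (i : ℕ) + 2 < n := by omega
      set j2 : Fin n := ⟨(i : ℕ) + 2, hi2⟩ with hj2def
      have h2 := h i j2 (Or.inr rfl)
      have hj2m : (τ j2 : ℕ) ≤ (m : ℕ) := (hτle j2).mp (by simp [hj2def]; omega)
      have hj2gt : ¬ (τ j2 : ℕ) ≤ (m : ℕ) - 1 := by
        intro hle
        exact h2 (by rw [Fin.le_def, hσi]; exact hle)
      have hτj2 : (τ j2 : ℕ) = (m : ℕ) := by omega
      have hj2j : j2 = j := by
        apply τ.injective
        apply Fin.ext
        rw [hτj2, hτj]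
      have : (i : ℕ) + 2 = (j : ℕ) := by rw [← hj2j]
      omega
    exact ⟨hσm, hτm⟩
  have key : ∀ m : Fin n, σ m = m ∧ τ m = m := by
    have main : ∀ d : ℕ, ∀ m : Fin n, n ≤ (m : ℕ) + 1 + d → σ m = m ∧ τ m = m := by
      intro d
      induction d with
      | zero =>
        intro m hm
        exact step m (fun k hk => absurd k.isLt (by omega))
      | succ d ih =>
        intro m hm
        refine step m (fun k hk => ih k (by omega))
    intro m
    exact main n m (by omega)
  intro i j
  rw [(key j).2, (key i).1]
end

section
/- Let n ≥ 2 and let M ∈ C_n. The columns of M have pairwise distinct Hamming weights, which are exactly 1, 2, ..., n. For w ∈ {1,...,n−1}, let swap_w(M) denote the matrix obtained from M by interchanging its (unique) column of Hamming weight w with its (unique) column of Hamming weight w+1. Then for every position (i,j) ∈ [n]×[n], there is at most one w ∈ {1,...,n−1} with swap_w(M)(i,j) ≠ M(i,j). -/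
open scoped Classical

/-- Let `M ∈ C_n`. The columns of `M` have pairwise distinct Hamming weights, which are
exactly `1, 2, …, n`; and for every position `(i, j)`, at most one of the `n − 1`
weight-adjacent column swaps (interchanging the unique column of weight `w` with the
unique column of weight `w + 1`, for `w ∈ {1, …, n − 1}`) changes the entry at `(i, j)`. -/
theorem column_weights_and_adjacent_swaps (n : ℕ) (hn : 2 ≤ n)
    (M : Fin n × Fin n → Bool) (hM : M ∈ Cn n) :
    Function.Injective (colWeight M)
    ∧ (∀ j : Fin n, colWeight M j ∈ Finset.Icc 1 n)
    ∧ (∀ w ∈ Finset.Icc 1 n, ∃ j : Fin n, colWeight M j = w)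
    ∧ ∀ p : Fin n × Fin n, ∀ w w' : ℕ, w ∈ Finset.Icc 1 (n - 1) →
        w' ∈ Finset.Icc 1 (n - 1) →
        ∀ k l k' l' : Fin n, colWeight M k = w → colWeight M l = w + 1 →
          colWeight M k' = w' → colWeight M l' = w' + 1 →
          colSwap M k l p ≠ M p → colSwap M k' l' p ≠ M p → w = w' := by

  obtain ⟨τ, hτ⟩ := hM
  have key : ∀ j, colWeight M j = n - (τ j).val := by
    intro j
    unfold colWeight
    have he : (Finset.univ.filter (fun i : Fin n => M (i, j) = true)) = Finset.Ici (τ j) := by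
      ext i
      simp [hτ (i, j), Finset.mem_Ici]
    rw [he, Fin.card_Ici]
  have hval : ∀ j, (τ j).val = n - colWeight M j := by
    intro j; have h1 := key j; have h2 := (τ j).isLt; omega
  have main : ∀ p : Fin n × Fin n, ∀ w : ℕ, w ∈ Finset.Icc 1 (n - 1) →
      ∀ k l : Fin n, colWeight M k = w → colWeight M l = w + 1 →
      colSwap M k l p ≠ M p → p.1.val + w + 1 = n := by
    intro p w hw k l hk hl hne
    simp only [Finset.mem_Icc] at hw
    have hvk := hval k
    have hvl := hval l
    rw [hk] at hvk
    rw [hl] at hvl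
    have hp1 := p.1.isLt
    unfold colSwap at hne
    by_cases h1 : p.2 = k
    · subst h1
      rw [Equiv.swap_apply_left] at hne
      rw [hτ (p.1, l), hτ (p.1, p.2)] at hne
      simp only [ne_eq, decide_eq_decide, Fin.le_def] at hne
      omega
    · by_cases h2 : p.2 = l
      · subst h2
        rw [Equiv.swap_apply_right] at hne
        rw [hτ (p.1, k), hτ (p.1, p.2)] at hne
        simp only [ne_eq, decide_eq_decide, Fin.le_def] at hne
        omega
      · rw [Equiv.swap_apply_of_ne_of_ne h1 h2] at hne
        exact absurd rfl hne
  refine ⟨?_, ?_, ?_, ?_⟩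
  · intro a b hab
    have ha := key a; have hb := key b
    have h1 := (τ a).isLt; have h2 := (τ b).isLt
    exact τ.injective (Fin.ext (by omega))
  · intro j
    have h1 := key j; have h2 := (τ j).isLt
    simp only [Finset.mem_Icc]; omega
  · intro w hw
    simp only [Finset.mem_Icc] at hw
    refine ⟨τ.symm ⟨n - w, by omega⟩, ?_⟩
    rw [key, Equiv.apply_symm_apply]
    simp only []
    omega
  · intro p w w' hw hw' k l k' l' hk hl hk' hl' hne hne'
    have h1 := main p w hw k l hk hl hne
    have h2 := main p w' hw' k' l' hk' hl' hne'
    omega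
end

section
/- Let k > 0 be a real number and let T : ℕ → ℝ be a function with T(n) ≥ 0 for all n ≥ 1, satisfying T(n) ≤ k·n·ln(n) + (2/n)·Σ_{i=1}^{n−1} T(i) for every integer n ≥ 1. Then T(n) ≤ 2k·n·(ln n)² for every integer n ≥ 1. -/
/-!
Strong induction on `n`. Since `x ↦ x (ln x)²` is increasing on `[1, ∞)`,
`Σ_{i<n} i (ln i)² ≤ ∫₁ⁿ x (ln x)² dx ≤ n²(ln n)²/2 − n² ln n/2 + n²/4`,
so the recurrence and the induction hypothesis give
`T n ≤ 2 k n (ln n)² − k n ln n + k n`, which is enough once `ln n ≥ 1`, i.e. `n ≥ 3`.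
The cases `n = 1, 2` are checked directly.
-/

open Real Finset

lemma hasDerivAt_antideriv_mul_log_sq {x : ℝ} (hx : x ≠ 0) :
    HasDerivAt (fun y : ℝ => y ^ 2 * log y ^ 2 / 2 - y ^ 2 * log y / 2 + y ^ 2 / 4)
      (x * log x ^ 2) x := by
  have hlog := hasDerivAt_log hx
  have hsq : HasDerivAt (fun y : ℝ => y ^ 2) (2 * x) x := by simpa using hasDerivAt_pow 2 x
  refine ((((hsq.mul (hlog.pow 2)).div_const 2).sub ((hsq.mul hlog).div_const 2)).add
    (hsq.div_const 4)).congr_deriv ?_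
  simp only [Pi.pow_apply]
  field_simp
  ring

lemma integral_one_mul_log_sq {b : ℝ} (hb : 0 < b) :
    ∫ x in (1 : ℝ)..b, x * log x ^ 2 =
      b ^ 2 * log b ^ 2 / 2 - b ^ 2 * log b / 2 + b ^ 2 / 4 - 1 / 4 := by
  have hpos : ∀ x ∈ Set.uIcc 1 b, x ≠ 0 := fun x hx =>
    (lt_of_lt_of_le (lt_min one_pos hb) hx.1).ne'
  rw [intervalIntegral.integral_eq_sub_of_hasDerivAt
    (fun x hx => hasDerivAt_antideriv_mul_log_sq (hpos x hx))]
  · simp only [log_one]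
    ring
  · exact (continuousOn_id.mul
      ((continuousOn_log.mono fun x hx => hpos x hx).pow 2)).intervalIntegrable

lemma monotoneOn_mul_log_sq : MonotoneOn (fun x : ℝ => x * log x ^ 2) (Set.Ici 1) := by
  intro a (ha : 1 ≤ a) b (hb : 1 ≤ b) hab
  have hlog : log a ≤ log b := log_le_log (by linarith) hab
  have hlog_nonneg : 0 ≤ log a := log_nonneg ha
  show a * log a ^ 2 ≤ b * log b ^ 2
  gcongr

lemma sum_Ico_mul_log_sq_le {n : ℕ} (hn : 1 ≤ n) :
    ∑ i ∈ Ico 1 n, (i : ℝ) * log i ^ 2 ≤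
      n ^ 2 * log n ^ 2 / 2 - n ^ 2 * log n / 2 + n ^ 2 / 4 := by
  have hsum := MonotoneOn.sum_le_integral_Ico hn
    (monotoneOn_mul_log_sq.mono fun x hx => by exact_mod_cast hx.1)
  rw [Nat.cast_one, integral_one_mul_log_sq (by exact_mod_cast hn)] at hsum
  linarith

lemma mul_log_add_two_div_mul_sum_le {k : ℝ} (hk : 0 ≤ k) {T : ℕ → ℝ} {n : ℕ}
    (hn : 3 ≤ n)
    (hT : ∀ i ∈ Ico 1 n, T i ≤ 2 * k * i * log i ^ 2) :
    k * n * log n + (2 / n) * ∑ i ∈ Ico 1 n, T i ≤ 2 * k * n * log n ^ 2 := by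
  have hn0 : (0 : ℝ) < n := by positivity
  have hlog : 1 ≤ log n := by
    rw [le_log_iff_exp_le hn0]
    exact exp_one_lt_three.le.trans (by exact_mod_cast hn)
  have hsum : ∑ i ∈ Ico 1 n, T i ≤
      2 * k * (n ^ 2 * log n ^ 2 / 2 - n ^ 2 * log n / 2 + n ^ 2 / 4) := by
    calc ∑ i ∈ Ico 1 n, T i ≤ ∑ i ∈ Ico 1 n, 2 * k * ((i : ℝ) * log i ^ 2) :=
          sum_le_sum fun i hi => (hT i hi).trans_eq (by ring)
      _ ≤ _ := by
          rw [← mul_sum]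
          exact mul_le_mul_of_nonneg_left (sum_Ico_mul_log_sq_le (by omega)) (by positivity)
  calc k * n * log n + (2 / n) * ∑ i ∈ Ico 1 n, T i
      ≤ k * n * log n +
          (2 / n) * (2 * k * (n ^ 2 * log n ^ 2 / 2 - n ^ 2 * log n / 2 + n ^ 2 / 4)) := by
        gcongr
    _ = 2 * k * n * log n ^ 2 - k * n * (log n - 1) := by
        field_simp
        ring
    _ ≤ 2 * k * n * log n ^ 2 := by
        have : 0 ≤ k * n * (log n - 1) := mul_nonneg (by positivity) (sub_nonneg.2 hlog)
        linarith

theorem quicksort_recurrence_general (k : ℝ) (hk : 0 < k) (T : ℕ → ℝ)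
    (hrec : ∀ n : ℕ, 1 ≤ n →
      T n ≤ k * n * Real.log n + (2 / n) * ∑ i ∈ Finset.Icc 1 (n - 1), T i) :
    ∀ n : ℕ, 1 ≤ n → T n ≤ 2 * k * n * (Real.log n) ^ 2 := by
  intro n
  induction n using Nat.strong_induction_on with
  | _ n ih =>
  intro hn
  have hT1 : T 1 ≤ 0 := by simpa using hrec 1 le_rfl
  obtain rfl | rfl | hn3 : n = 1 ∨ n = 2 ∨ 3 ≤ n := by omega
  · simpa using hT1
  · have hT2 : T 2 ≤ 2 * k * log 2 + T 1 := by simpa [mul_comm] using hrec 2 one_le_two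
    have hlog2 : 1 ≤ 2 * log 2 := by linarith [log_two_gt_d9]
    have : 2 * k * log 2 ≤ 2 * k * log 2 * (2 * log 2) :=
      le_mul_of_one_le_right (by positivity) hlog2
    push_cast
    linarith
  · have hIcc : Icc 1 (n - 1) = Ico 1 n := by ext; simp only [mem_Icc, mem_Ico]; omega
    have hrec_n := hrec n hn
    rw [hIcc] at hrec_n
    exact hrec_n.trans <| mul_log_add_two_div_mul_sum_le hk.le hn3 fun i hi =>
      ih i (mem_Ico.1 hi).2 (mem_Ico.1 hi).1

/-- Let `k > 0` and let `T : ℕ → ℝ` be nonnegative on positive integers, satisfying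
`T n ≤ k n ln n + (2 / n) Σ_{i=1}^{n−1} T i` for every `n ≥ 1`. Then
`T n ≤ 2 k n (ln n)²` for every `n ≥ 1`. -/
theorem quicksort_recurrence (k : ℝ) (hk : 0 < k) (T : ℕ → ℝ)
    (hT0 : ∀ n : ℕ, 1 ≤ n → 0 ≤ T n)
    (hrec : ∀ n : ℕ, 1 ≤ n →
      T n ≤ k * n * Real.log n + (2 / n) * ∑ i ∈ Finset.Icc 1 (n - 1), T i) :
    ∀ n : ℕ, 1 ≤ n → T n ≤ 2 * k * n * (Real.log n) ^ 2 :=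
  quicksort_recurrence_general k hk T hrec
end
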